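/- arXiv:2411.15569 — 2 statements merged into one kernel-verified Lean document; each statement's English description precedes it below -/
import Mathlib

section
/- Let k be a field of characteristic p > 0, a a finite-dimensional k-vector space of dimension d, S̄(a) the truncated symmetric algebra, and N = (p-1)d. For each 0 ≤ i ≤ N, the multiplication pairing S̄^i(a) × S̄^{N-i}(a) → S̄^N(a) ≅ k is non-degenerate in both variables. Consequently dim S̄^i(a) = dim S̄^{N-i}(a). -/
open MvPolynomial

/-- Ideal of `p`-th powers of the basis vectors of a `d`-dimensional vector space `a`,
defining the truncated symmetric algebra `S̄(a) = S(a)/(v^p : v ∈ a)`. -/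
noncomputable def truncD (k : Type*) [Field k] (d p : ℕ) : Ideal (MvPolynomial (Fin d) k) :=
  Ideal.span (Set.range fun i : Fin d => X i ^ p)

/-- Degree-`n` graded component of the truncated symmetric algebra `S̄(a)`. -/
noncomputable def SbarD (k : Type*) [Field k] (d p n : ℕ) :
    Submodule k (MvPolynomial (Fin d) k ⧸ truncD k d p) :=
  Submodule.map (Ideal.Quotient.mkₐ k (truncD k d p)).toLinearMap
    (homogeneousSubmodule (Fin d) k n)

/-!
The ideal `(x_j^p)` is a monomial ideal: a polynomial lies in it iff every monomial of its
support has some exponent `≥ p`. So the coefficient of the top monomial `x^(p-1,…,p-1)` descends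
to a linear form on `S̄(a)`, and a class is nonzero iff some monomial with all exponents `< p`
occurs in it. For such a monomial `x^e` of a nonzero class of degree `i`, multiplying by the
complementary monomial `x^(p-1-e)`, of degree `N - i`, moves its coefficient to the top monomial. Hence the pairing `S̄^i × S̄^(N-i) → k` is injective on both
sides, and therefore a perfect pairing of finite-dimensional spaces.
-/

theorem MvPolynomial.coeff_mul_monomial_tsub {σ R : Type*} [CommSemiring R]
    (f : MvPolynomial σ R) {a e : σ →₀ ℕ} (he : e ≤ a) :
    coeff a (f * monomial (a - e) 1) = coeff e f := by
  rw [coeff_mul_monomial', if_pos tsub_le_self, tsub_tsub_cancel_of_le he, mul_one]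

theorem Finsupp.degree_tsub {σ : Type*} {a e : σ →₀ ℕ} (he : e ≤ a) :
    (a - e).degree = a.degree - e.degree := by
  have h := map_add degree (a - e) e
  rw [tsub_add_cancel_of_le he] at h
  omega

section Truncated

variable {k : Type*} [Field k] {d p : ℕ}

noncomputable def topExp (d p : ℕ) : Fin d →₀ ℕ :=
  Finsupp.equivFunOnFinite.symm fun _ => p - 1

theorem degree_topExp : (topExp d p).degree = (p - 1) * d := by
  simp [Finsupp.degree_eq_sum, topExp, mul_comm]

theorem le_topExp_iff (hp : 0 < p) {e : Fin d →₀ ℕ} : e ≤ topExp d p ↔ ∀ j, e j < p := by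
  simp only [Finsupp.le_def, topExp, Finsupp.coe_equivFunOnFinite_symm]
  exact forall_congr' fun j => by omega

theorem mem_truncD_iff {f : MvPolynomial (Fin d) k} :
    f ∈ truncD k d p ↔ ∀ e ∈ f.support, ∃ j, p ≤ e j := by
  have hspan : truncD k d p =
      Ideal.span ((fun s => monomial s (1 : k)) '' Set.range fun j => Finsupp.single j p) := by
    rw [truncD, ← Set.range_comp]
    simp only [Function.comp_def, X_pow_eq_monomial]
  simp [hspan, mem_ideal_span_monomial_image, Finsupp.single_le_iff]

theorem coeff_topExp_eq_zero_of_mem_truncD (hp : 0 < p) {f : MvPolynomial (Fin d) k}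
    (hf : f ∈ truncD k d p) : coeff (topExp d p) f = 0 := by
  by_contra h
  obtain ⟨j, hj⟩ := mem_truncD_iff.mp hf _ (mem_support_iff.mpr h)
  exact (hj.trans_lt ((le_topExp_iff hp).mp le_rfl j)).false

theorem exists_mem_support_le_topExp (hp : 0 < p) {f : MvPolynomial (Fin d) k}
    (hf : f ∉ truncD k d p) : ∃ e ∈ f.support, e ≤ topExp d p := by
  simpa [mem_truncD_iff, le_topExp_iff hp] using hf

variable (k d) in
noncomputable def topCoeff (hp : 0 < p) : (MvPolynomial (Fin d) k ⧸ truncD k d p) →ₗ[k] k :=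
  Submodule.liftQ ((truncD k d p).restrictScalars k) (lcoeff k (topExp d p))
      (fun _ hf => coeff_topExp_eq_zero_of_mem_truncD hp hf) ∘ₗ
    (Submodule.Quotient.restrictScalarsEquiv k (truncD k d p)).symm.toLinearMap

theorem topCoeff_mk (hp : 0 < p) (f : MvPolynomial (Fin d) k) :
    topCoeff k d hp (Ideal.Quotient.mk (truncD k d p) f) = coeff (topExp d p) f :=
  rfl

theorem exists_topCoeff_mul_ne_zero (hp : 0 < p) {n : ℕ}
    {x : MvPolynomial (Fin d) k ⧸ truncD k d p} (hx : x ∈ SbarD k d p n) (hx0 : x ≠ 0) :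
    ∃ y ∈ SbarD k d p ((p - 1) * d - n), topCoeff k d hp (x * y) ≠ 0 := by
  obtain ⟨f, hf, rfl⟩ := hx
  obtain ⟨e, he, hle⟩ := exists_mem_support_le_topExp hp
    fun h => hx0 (Ideal.Quotient.eq_zero_iff_mem.mpr h)
  have hdeg : e.degree = n := by
    rw [Finsupp.degree_eq_weight_one]
    exact hf (mem_support_iff.mp he)
  refine ⟨Ideal.Quotient.mk _ (monomial (topExp d p - e) 1),
    ⟨_, isHomogeneous_monomial _ ?_, rfl⟩, ?_⟩
  · rw [Finsupp.degree_tsub hle, degree_topExp, hdeg]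
  · change topCoeff k d hp (Ideal.Quotient.mk _ f * _) ≠ 0
    rw [← map_mul, topCoeff_mk, coeff_mul_monomial_tsub _ hle]
    exact mem_support_iff.mp he

theorem exists_mul_ne_zero_of_mem_SbarD (hp : 0 < p) {n : ℕ}
    {x : MvPolynomial (Fin d) k ⧸ truncD k d p} (hx : x ∈ SbarD k d p n) (hx0 : x ≠ 0) :
    ∃ y ∈ SbarD k d p ((p - 1) * d - n), x * y ≠ 0 := by
  obtain ⟨y, hy, hxy⟩ := exists_topCoeff_mul_ne_zero hp hx hx0
  exact ⟨y, hy, fun h => hxy (by rw [h, map_zero])⟩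

instance SbarD.finiteDimensional (n : ℕ) : FiniteDimensional k (SbarD k d p n) :=
  have : FiniteDimensional k (homogeneousSubmodule (Fin d) k n) :=
    Submodule.finiteDimensional_of_le fun _ hf =>
      (mem_restrictTotalDegree _ _ _).mpr (IsHomogeneous.totalDegree_le hf)
  Module.Finite.map _ _

variable (k d) in
noncomputable def truncPairing (hp : 0 < p) (a b : ℕ) :
    SbarD k d p a →ₗ[k] SbarD k d p b →ₗ[k] k :=
  ((LinearMap.mul k _).compr₂ (topCoeff k d hp)).domRestrict₁₂ _ _

theorem truncPairing_flip (hp : 0 < p) (a b : ℕ) :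
    (truncPairing k d hp a b).flip = truncPairing k d hp b a := by
  ext x y
  simp only [truncPairing, LinearMap.flip_apply, LinearMap.domRestrict₁₂_apply,
    LinearMap.compr₂_apply, LinearMap.mul_apply', mul_comm]

theorem truncPairing_injective (hp : 0 < p) {a b : ℕ} (hab : a + b = (p - 1) * d) :
    Function.Injective (truncPairing k d hp a b) := by
  obtain rfl : b = (p - 1) * d - a := by omega
  rw [← LinearMap.ker_eq_bot, LinearMap.ker_eq_bot']
  intro x hx
  by_contra hx0
  obtain ⟨y, hy, hxy⟩ := exists_topCoeff_mul_ne_zero hp x.2 (Subtype.coe_ne_coe.mpr hx0)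
  exact hxy (LinearMap.congr_fun hx ⟨y, hy⟩)

end Truncated

theorem hochschild_stmt2_general (k : Type*) [Field k] (p : ℕ) (hp : 0 < p) (d i : ℕ)
    (hi : i ≤ (p - 1) * d) :
    (∀ x ∈ SbarD k d p i, x ≠ 0 → ∃ y ∈ SbarD k d p ((p - 1) * d - i), x * y ≠ 0) ∧
    (∀ y ∈ SbarD k d p ((p - 1) * d - i), y ≠ 0 → ∃ x ∈ SbarD k d p i, x * y ≠ 0) ∧
    Module.finrank k (SbarD k d p i) = Module.finrank k (SbarD k d p ((p - 1) * d - i)) := by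
  have hsub : (p - 1) * d - ((p - 1) * d - i) = i := Nat.sub_sub_self hi
  refine ⟨fun x => exists_mul_ne_zero_of_mem_SbarD hp, fun y hy hy0 => ?_, ?_⟩
  · obtain ⟨x, hx, hyx⟩ := exists_mul_ne_zero_of_mem_SbarD hp hy hy0
    exact ⟨x, hsub ▸ hx, mul_comm x y ▸ hyx⟩
  · have hsum : i + ((p - 1) * d - i) = (p - 1) * d := Nat.add_sub_cancel' hi
    have hflip := truncPairing_injective (k := k) hp ((add_comm _ _).trans hsum)
    rw [← truncPairing_flip] at hflip
    have := LinearMap.IsPerfPair.of_injective (truncPairing_injective hp hsum) hflip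
    exact Module.finrank_of_isPerfPair (truncPairing k d hp _ _)

/-- For `0 ≤ i ≤ N = (p-1)d`, the multiplication pairing
`S̄^i(a) × S̄^{N-i}(a) → S̄^N(a) ≅ k` is non-degenerate in both variables; consequently
`dim S̄^i(a) = dim S̄^{N-i}(a)`. -/
theorem hochschild_stmt2 (k : Type*) [Field k] (p : ℕ) [CharP k p] (hp : 0 < p) (d i : ℕ)
    (hi : i ≤ (p - 1) * d) :
    (∀ x ∈ SbarD k d p i, x ≠ 0 → ∃ y ∈ SbarD k d p ((p - 1) * d - i), x * y ≠ 0) ∧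
    (∀ y ∈ SbarD k d p ((p - 1) * d - i), y ≠ 0 → ∃ x ∈ SbarD k d p i, x * y ≠ 0) ∧
    Module.finrank k (SbarD k d p i) = Module.finrank k (SbarD k d p ((p - 1) * d - i)) :=
  hochschild_stmt2_general k p hp d i hi
end

section
/- Let p ≥ 3 be prime, k a field of characteristic p, and b the Lie algebra with basis h, e and [h,e] = 2e. Under the adjoint action of b on the truncated algebra S̄(b) = S(b)/(h^p, e^p), each graded piece S̄^n(b) is a cyclic module over the restricted enveloping algebra u(b): it is generated by h^n for 0 ≤ n ≤ p-1 and by e^{n-p+1} h^{p-1} for p ≤ n ≤ 2p-2. -/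
/-!
`ad(e)` sends `hⁱ eʲ` to `-2i hⁱ⁻¹ eʲ⁺¹`, and for `p ≠ 2` and `0 < i < p` this coefficient is a
unit. So any `ad(e)`-stable subspace containing `hᵃ eᵇ` with `a < p` contains every `hⁱ e^{a+b-i}`
with `i ≤ a`. Starting from `hⁿ` (resp. from `h^{p-1} e^{n-p+1}`) this reaches all monomials of
degree `n` whose exponents are both below `p`; the remaining ones lie in `(h^p, e^p)`.
-/

open MvPolynomial

/-- Ideal `(h^p, e^p)` defining `S̄(b) = S(b)/(h^p, e^p)`, where `X 0 = h`, `X 1 = e`. -/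
noncomputable def trunc2 (k : Type*) [Field k] (p : ℕ) : Ideal (MvPolynomial (Fin 2) k) :=
  Ideal.span {X 0 ^ p, X 1 ^ p}

/-- The adjoint action of `e`: the derivation with `e·h = -2e`, `e·e = 0`, i.e.
`ad(e)(h^i e^j) = -2i h^{i-1} e^{j+1}`. -/
noncomputable def adE (k : Type*) [Field k] :
    MvPolynomial (Fin 2) k →ₗ[k] MvPolynomial (Fin 2) k :=
  (-2 : k) • ((LinearMap.mulLeft k (X 1 : MvPolynomial (Fin 2) k)).comp (pderiv (0 : Fin 2)).toLinearMap)

/-- The adjoint action of `h`: the derivation with `h·h = 0`, `h·e = 2e`, i.e.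
`ad(h)(h^i e^j) = 2j h^i e^j`. -/
noncomputable def adH (k : Type*) [Field k] :
    MvPolynomial (Fin 2) k →ₗ[k] MvPolynomial (Fin 2) k :=
  (2 : k) • ((LinearMap.mulLeft k (X 1 : MvPolynomial (Fin 2) k)).comp (pderiv (1 : Fin 2)).toLinearMap)

theorem CharP.natCast_ne_zero_of_pos_of_lt {R : Type*} [AddMonoidWithOne R] {p : ℕ} [CharP R p]
    {i : ℕ} (hi : 0 < i) (hip : i < p) : (i : R) ≠ 0 := fun h =>
  (Nat.le_of_dvd hi ((CharP.cast_eq_zero_iff R p i).mp h)).not_gt hip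

theorem MvPolynomial.homogeneousSubmodule_fin_two_le {R : Type*} [CommSemiring R] {n : ℕ}
    {M : Submodule R (MvPolynomial (Fin 2) R)}
    (hM : ∀ i j, i + j = n → (X 0 ^ i * X 1 ^ j : MvPolynomial (Fin 2) R) ∈ M) :
    homogeneousSubmodule (Fin 2) R n ≤ M := by
  rw [homogeneousSubmodule_eq_finsupp_supported, AddMonoidAlgebra.supported_eq_span_single,
    Submodule.span_le]
  rintro _ ⟨d, hd, rfl⟩
  have hdeg : d 0 + d 1 = n := by
    simpa [Finsupp.degree_eq_sum, Fin.sum_univ_two] using hd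
  have hmon : monomial d (1 : R) = X 0 ^ d 0 * X 1 ^ d 1 := by
    rw [monomial_eq, C_1, one_mul, Finsupp.prod_fintype _ _ fun _ => pow_zero _,
      Fin.prod_univ_two]
  change monomial d (1 : R) ∈ M
  rw [hmon]
  exact hM _ _ hdeg

section

variable {k : Type*} [Field k]

theorem adE_X_zero_pow_mul_X_one_pow (i j : ℕ) :
    adE k (X 0 ^ (i + 1) * X 1 ^ j) = ((-2 : k) * (i + 1 : ℕ)) • (X 0 ^ i * X 1 ^ (j + 1)) := by
  change (-2 : k) • ((X 1 : MvPolynomial (Fin 2) k) * pderiv 0 (X 0 ^ (i + 1) * X 1 ^ j)) = _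
  rw [pderiv_mul, pderiv_pow, pderiv_pow, pderiv_X_self, pderiv_X_of_ne (by decide), mul_smul,
    Nat.cast_smul_eq_nsmul, nsmul_eq_mul, Nat.add_sub_cancel]
  congr 1
  ring

theorem X_zero_pow_mul_X_one_pow_mem_of_adE_mem {W : Submodule k (MvPolynomial (Fin 2) k)}
    (hWe : ∀ x ∈ W, adE k x ∈ W) (h2 : (2 : k) ≠ 0) {i j : ℕ} (hi : ((i + 1 : ℕ) : k) ≠ 0)
    (hW : X 0 ^ (i + 1) * X 1 ^ j ∈ W) : X 0 ^ i * X 1 ^ (j + 1) ∈ W := by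
  have hc : (-2 : k) * (i + 1 : ℕ) ≠ 0 := mul_ne_zero (neg_ne_zero.mpr h2) hi
  have := W.smul_mem ((-2 : k) * (i + 1 : ℕ))⁻¹ (hWe _ hW)
  rwa [adE_X_zero_pow_mul_X_one_pow, inv_smul_smul₀ hc] at this

theorem X_zero_pow_mul_X_one_pow_mem_of_adE_stable {p : ℕ} [CharP k p]
    {W : Submodule k (MvPolynomial (Fin 2) k)} (hWe : ∀ x ∈ W, adE k x ∈ W) (h2 : (2 : k) ≠ 0)
    {a b : ℕ} (hap : a < p) (hW : X 0 ^ a * X 1 ^ b ∈ W) {i j : ℕ} (hia : i ≤ a)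
    (hij : i + j = a + b) : X 0 ^ i * X 1 ^ j ∈ W := by
  obtain rfl : j = a + b - i := by omega
  induction hia using Nat.decreasingInduction with
  | self => simpa using hW
  | of_succ i hi ih =>
    have hstep := X_zero_pow_mul_X_one_pow_mem_of_adE_mem hWe h2
      (CharP.natCast_ne_zero_of_pos_of_lt i.succ_pos (lt_of_le_of_lt hi hap)) (ih (by omega))
    rwa [show a + b - (i + 1) + 1 = a + b - i by omega] at hstep

theorem X_zero_pow_mul_X_one_pow_mem_trunc2 {p i j : ℕ} (h : p ≤ i ∨ p ≤ j) :
    X 0 ^ i * X 1 ^ j ∈ trunc2 k p := by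
  rcases h with hi | hj
  · rw [← Nat.sub_add_cancel hi, pow_add, mul_right_comm]
    exact Ideal.mul_mem_left _ _ (Ideal.subset_span (Set.mem_insert _ _))
  · rw [← Nat.sub_add_cancel hj, pow_add, ← mul_assoc]
    exact Ideal.mul_mem_left _ _ (Ideal.subset_span (Set.mem_insert_of_mem _ rfl))

end

theorem hochschild_stmt8_general (k : Type*) [Field k] (p : ℕ) [CharP k p]
    (h3 : 3 ≤ p) (n : ℕ) (gen : MvPolynomial (Fin 2) k)
    (hgen : (n ≤ p - 1 ∧ gen = X 0 ^ n) ∨ (p ≤ n ∧ gen = X 1 ^ (n - p + 1) * X 0 ^ (p - 1)))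
    (W : Submodule k (MvPolynomial (Fin 2) k)) (hgenW : gen ∈ W)
    (hWe : ∀ x ∈ W, adE k x ∈ W) :
    homogeneousSubmodule (Fin 2) k n ≤ W ⊔ (trunc2 k p).restrictScalars k := by
  have h2 : (2 : k) ≠ 0 := by
    exact_mod_cast CharP.cast_ne_zero_of_ne_of_prime k Nat.prime_two (by omega)
  refine homogeneousSubmodule_fin_two_le fun i j hij => ?_
  by_cases hbig : p ≤ i ∨ p ≤ j
  · exact Submodule.mem_sup_right (X_zero_pow_mul_X_one_pow_mem_trunc2 hbig)
  apply Submodule.mem_sup_left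
  rcases hgen with ⟨hnp, rfl⟩ | ⟨hpn, rfl⟩
  · exact X_zero_pow_mul_X_one_pow_mem_of_adE_stable hWe h2 (a := n) (b := 0) (i := i)
      (by omega) (by simpa using hgenW) (by omega) (by omega)
  · exact X_zero_pow_mul_X_one_pow_mem_of_adE_stable hWe h2 (a := p - 1) (b := n - p + 1)
      (i := i) (by omega) (by rwa [mul_comm] at hgenW) (by omega) (by omega)

/-- For a prime `p ≥ 3`, each graded piece `S̄ⁿ(b)` of the truncated algebra of the Borel
`b = ⟨h, e⟩`, `[h,e] = 2e`, is a cyclic `u(b)`-module under the adjoint action, generated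
by `hⁿ` for `0 ≤ n ≤ p-1` and by `e^{n-p+1} h^{p-1}` for `p ≤ n ≤ 2p-2`: every subspace
containing the generator and stable under `ad(e)` and `ad(h)` contains all of `S̄ⁿ(b)`
(i.e. the degree-`n` homogeneous component, modulo the truncation ideal). -/
theorem hochschild_stmt8 (k : Type*) [Field k] (p : ℕ) [CharP k p] (hp : p.Prime)
    (h3 : 3 ≤ p) (n : ℕ) (hn : n ≤ 2 * p - 2) (gen : MvPolynomial (Fin 2) k)
    (hgen : (n ≤ p - 1 ∧ gen = X 0 ^ n) ∨ (p ≤ n ∧ gen = X 1 ^ (n - p + 1) * X 0 ^ (p - 1)))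
    (W : Submodule k (MvPolynomial (Fin 2) k)) (hgenW : gen ∈ W)
    (hWe : ∀ x ∈ W, adE k x ∈ W) (hWh : ∀ x ∈ W, adH k x ∈ W) :
    homogeneousSubmodule (Fin 2) k n ≤ W ⊔ (trunc2 k p).restrictScalars k :=
  hochschild_stmt8_general k p h3 n gen hgen W hgenW hWe
end
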